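/- The smooth boundary algebra 𝔇ⁿ_smooth equals the commutant of the diagonal left-translation representation: a ℂ-linear endomorphism T of H_n lies in 𝔇ⁿ_smooth if and only if T U_g = U_g T for all g ∈ G. (This identifies 𝔇ⁿ_smooth with End_{Rep(G)}((ℂ^G)^{⊗n}).) -/
import Mathlib


noncomputable section

open scoped BigOperators

/-- The Hilbert space `H_n = ℂ[G]^{⊗ n}`, realized as functions `G^n → ℂ`;
the basis ket `|g₁,…,g_n⟩` is the indicator function of `(g₁,…,g_n)`. -/
abbrev Hn (G : Type) (n : ℕ) : Type := (Fin n → G) → ℂ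

variable (G : Type) [Group G] [Fintype G] [DecidableEq G] (n : ℕ)

/-- Diagonal operator with diagonal entries `c` (in the ket basis). -/
def diagOp (c : (Fin n → G) → ℂ) : Module.End ℂ (Hn G n) where
  toFun f := fun x => c x * f x
  map_add' f g := by funext x; simp only [Pi.add_apply]; ring
  map_smul' r f := by
    funext x
    simp only [Pi.smul_apply, smul_eq_mul, RingHom.id_apply]
    ring

/-- The operator sending the ket `|y⟩` to the ket `|σ y⟩`, where `τ = σ⁻¹`. -/
def permOp (τ : (Fin n → G) → (Fin n → G)) : Module.End ℂ (Hn G n) :=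
  LinearMap.funLeft ℂ ℂ τ

/-- `R^g_i`: right translation at site `i`, `|…, g_i, …⟩ ↦ |…, g_i g, …⟩`. -/
def Rop (i : Fin n) (g : G) : Module.End ℂ (Hn G n) :=
  permOp G n fun x => Function.update x i (x i * g⁻¹)

/-- `S̃^{(h)}` at sites `i` and `j` (used with `j = i + 1`): the projection onto
kets with `g_i⁻¹ g_j = h`. -/
def Sop (i j : Fin n) (h : G) : Module.End ℂ (Hn G n) :=
  diagOp G n fun x => if (x i)⁻¹ * x j = h then 1 else 0

/-- `U_g`: the diagonal left translation `|g₁,…,g_n⟩ ↦ |g g₁,…,g g_n⟩`. -/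
def Uop (g : G) : Module.End ℂ (Hn G n) :=
  permOp G n fun x k => g⁻¹ * x k

/-- Generators `R^g_i` and `S̃^{(h)}_i` of the smooth boundary algebra. -/
def smoothGens : Set (Module.End ℂ (Hn G n)) :=
  {T | ∃ (i : Fin n) (g : G), T = Rop G n i g} ∪
  {T | ∃ (i j : Fin n) (h : G), (i : ℕ) + 1 = (j : ℕ) ∧ T = Sop G n i j h}

/-- The smooth boundary algebra `𝔇ⁿ_smooth`. -/
def DSmooth : Subalgebra ℂ (Module.End ℂ (Hn G n)) :=
  Algebra.adjoin ℂ (smoothGens G n)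

/-! ### Auxiliary definitions -/

/-- The basis ket `|y⟩`. -/
def ket (y : Fin n → G) : Hn G n := fun x => if x = y then 1 else 0

variable {G n}

theorem diagOp_apply (c : (Fin n → G) → ℂ) (f : Hn G n) (x : Fin n → G) :
    diagOp G n c f x = c x * f x := rfl

theorem permOp_apply (τ : (Fin n → G) → (Fin n → G)) (f : Hn G n) (x : Fin n → G) :
    permOp G n τ f x = f (τ x) := rfl

theorem ket_decomp (f : Hn G n) : f = ∑ y : Fin n → G, f y • ket G n y := by
  funext x
  rw [Finset.sum_apply]
  simp only [Pi.smul_apply, ket, smul_eq_mul, mul_ite, mul_one, mul_zero]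
  rw [Finset.sum_ite_eq Finset.univ x f]
  simp

theorem end_ext {T S : Module.End ℂ (Hn G n)}
    (h : ∀ y, T (ket G n y) = S (ket G n y)) : T = S := by
  apply LinearMap.ext
  intro f
  rw [ket_decomp f, map_sum, map_sum]
  simp only [map_smul, h]

theorem diagOp_ket (c : (Fin n → G) → ℂ) (z : Fin n → G) :
    diagOp G n c (ket G n z) = c z • ket G n z := by
  funext x
  simp only [diagOp_apply, Pi.smul_apply, ket, smul_eq_mul]
  by_cases hx : x = z <;> simp [hx]

theorem Uop_ket (g : G) (y : Fin n → G) :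
    Uop G n g (ket G n y) = ket G n (fun k => g * y k) := by
  funext x
  simp only [Uop, permOp_apply, ket]
  congr 1
  simp only [eq_iff_iff]
  constructor
  · intro h; funext k
    have := congrFun h k
    rw [← this]; group
  · intro h; funext k
    have := congrFun h k
    rw [this]; group

/-! ### Global right translation -/

def Rall (h : Fin n → G) : Module.End ℂ (Hn G n) :=
  permOp G n fun z i => z i * (h i)⁻¹

theorem Rall_ket (h : Fin n → G) (y : Fin n → G) :
    Rall h (ket G n y) = ket G n (fun i => y i * h i) := by
  funext x
  simp only [Rall, permOp_apply, ket]
  congr 1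
  simp only [eq_iff_iff]
  constructor
  · intro hh; funext k
    have := congrFun hh k
    rw [eq_comm, eq_mul_inv_iff_mul_eq] at this
    exact this.symm
  · intro hh; funext k
    have := congrFun hh k
    rw [this]; group

theorem Rall_mem (h : Fin n → G) : Rall h ∈ DSmooth G n := by
  have key : ∀ m : ℕ, Rall (fun i : Fin n => if (i : ℕ) < m then h i else 1) ∈ DSmooth G n := by
    intro m
    induction m with
    | zero =>
      have : Rall (fun i : Fin n => if (i : ℕ) < 0 then h i else 1) = 1 := by
        apply LinearMap.ext; intro f
        funext z
        simp [Rall, permOp_apply]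
      rw [this]; exact one_mem _
    | succ m ih =>
      by_cases hm : m < n
      · have step : Rall (fun i : Fin n => if (i : ℕ) < m + 1 then h i else 1)
            = Rop G n ⟨m, hm⟩ (h ⟨m, hm⟩) *
              Rall (fun i : Fin n => if (i : ℕ) < m then h i else 1) := by
          apply LinearMap.ext; intro f
          funext z
          simp only [Module.End.mul_apply, Rop, Rall, permOp_apply]
          congr 1
          funext i
          by_cases hi : i = ⟨m, hm⟩
          · subst hi
            simp [Function.update_self]
          · have hi' : (i : ℕ) ≠ m := by
              intro hc; exact hi (Fin.ext hc)
            rw [Function.update_of_ne hi]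
            by_cases hlt : (i : ℕ) < m
            · simp [hlt, Nat.lt_succ_of_lt hlt]
            · have h1 : ¬ (i : ℕ) < m + 1 := by omega
              simp [hlt, h1]
        rw [step]
        exact mul_mem (Algebra.subset_adjoin (Or.inl ⟨⟨m, hm⟩, h ⟨m, hm⟩, rfl⟩)) ih
      · have : (fun i : Fin n => if (i : ℕ) < m + 1 then h i else 1)
            = fun i : Fin n => if (i : ℕ) < m then h i else 1 := by
          funext i
          have : (i : ℕ) < m := lt_of_lt_of_le i.isLt (le_of_not_gt hm)
          simp [this, Nat.lt_succ_of_lt this]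
        rw [this]; exact ih
  have := key n
  have heq : (fun i : Fin n => if (i : ℕ) < n then h i else 1) = h := by
    funext i; simp [i.isLt]
  rwa [heq] at this

/-! ### Chain projection -/

def chainCond (y z : Fin n → G) : Prop :=
  ∀ i j : Fin n, (i : ℕ) + 1 = (j : ℕ) → (z i)⁻¹ * z j = (y i)⁻¹ * y j

instance (y z : Fin n → G) : Decidable (chainCond y z) := by
  unfold chainCond; infer_instance

def Pchain (y : Fin n → G) : Module.End ℂ (Hn G n) :=
  diagOp G n fun z => if chainCond y z then 1 else 0

theorem diagOp_mul (c c' : (Fin n → G) → ℂ) :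
    diagOp G n c * diagOp G n c' = diagOp G n (fun x => c x * c' x) := by
  apply LinearMap.ext; intro f
  funext x
  simp [diagOp_apply, mul_assoc]

theorem Pchain_mem (y : Fin n → G) : Pchain y ∈ DSmooth G n := by
  have key : ∀ m : ℕ, diagOp G n (fun z => if
      (∀ i j : Fin n, (i : ℕ) + 1 = (j : ℕ) → (j : ℕ) ≤ m →
        (z i)⁻¹ * z j = (y i)⁻¹ * y j) then 1 else 0) ∈ DSmooth G n := by
    intro m
    induction m with
    | zero =>
      have : diagOp G n (fun z => if
          (∀ i j : Fin n, (i : ℕ) + 1 = (j : ℕ) → (j : ℕ) ≤ 0 →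
            (z i)⁻¹ * z j = (y i)⁻¹ * y j) then 1 else 0) = 1 := by
        apply LinearMap.ext; intro f
        funext z
        rw [diagOp_apply, if_pos]
        · simp
        · intro i j hij hj; omega
      rw [this]; exact one_mem _
    | succ m ih =>
      by_cases hm : m + 1 < n
      · have hm' : m < n := by omega
        have step : diagOp G n (fun z => if
            (∀ i j : Fin n, (i : ℕ) + 1 = (j : ℕ) → (j : ℕ) ≤ m + 1 →
              (z i)⁻¹ * z j = (y i)⁻¹ * y j) then 1 else 0)
            = Sop G n ⟨m, hm'⟩ ⟨m + 1, hm⟩ ((y ⟨m, hm'⟩)⁻¹ * y ⟨m + 1, hm⟩) *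
              diagOp G n (fun z => if
              (∀ i j : Fin n, (i : ℕ) + 1 = (j : ℕ) → (j : ℕ) ≤ m →
                (z i)⁻¹ * z j = (y i)⁻¹ * y j) then 1 else 0) := by
          rw [Sop, diagOp_mul]
          congr 1
          funext z
          by_cases h1 : ∀ i j : Fin n, (i : ℕ) + 1 = (j : ℕ) → (j : ℕ) ≤ m + 1 →
              (z i)⁻¹ * z j = (y i)⁻¹ * y j
          · rw [if_pos h1, if_pos, if_pos]
            · simp
            · intro i j hij hj
              exact h1 i j hij (by omega)
            · exact h1 ⟨m, hm'⟩ ⟨m + 1, hm⟩ rfl (le_refl _)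
          · rw [if_neg h1]
            push_neg at h1
            obtain ⟨i, j, hij, hj, hne⟩ := h1
            by_cases hjm : (j : ℕ) ≤ m
            · have hc : ¬ (∀ i j : Fin n, (i : ℕ) + 1 = (j : ℕ) → (j : ℕ) ≤ m →
                  (z i)⁻¹ * z j = (y i)⁻¹ * y j) := fun hc => hne (hc i j hij hjm)
              rw [if_neg hc, mul_zero]
            · have hjm1 : (j : ℕ) = m + 1 := by omega
              have hi : i = ⟨m, hm'⟩ := Fin.ext (show (i : ℕ) = m by omega)
              have hj' : j = ⟨m + 1, hm⟩ := Fin.ext (show (j : ℕ) = m + 1 from hjm1)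
              rw [hi, hj'] at hne
              rw [if_neg hne, zero_mul]
        rw [step]
        exact mul_mem (Algebra.subset_adjoin (Or.inr ⟨⟨m, hm'⟩, ⟨m + 1, hm⟩,
          (y ⟨m, hm'⟩)⁻¹ * y ⟨m + 1, hm⟩, rfl, rfl⟩)) ih
      · have : (fun z : Fin n → G => if
            (∀ i j : Fin n, (i : ℕ) + 1 = (j : ℕ) → (j : ℕ) ≤ m + 1 →
              (z i)⁻¹ * z j = (y i)⁻¹ * y j) then (1 : ℂ) else 0)
            = fun z => if
            (∀ i j : Fin n, (i : ℕ) + 1 = (j : ℕ) → (j : ℕ) ≤ m →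
              (z i)⁻¹ * z j = (y i)⁻¹ * y j) then 1 else 0 := by
          funext z
          congr 1
          simp only [eq_iff_iff]
          constructor
          · intro h i j hij hj; exact h i j hij (by omega)
          · intro h i j hij hj
            have : (j : ℕ) ≤ m := by have := j.isLt; omega
            exact h i j hij this
        rw [this]; exact ih
  have := key n
  have heq : (fun z : Fin n → G => if
      (∀ i j : Fin n, (i : ℕ) + 1 = (j : ℕ) → (j : ℕ) ≤ n →
        (z i)⁻¹ * z j = (y i)⁻¹ * y j) then (1 : ℂ) else 0)
      = fun z => if chainCond y z then 1 else 0 := by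
    funext z
    congr 1
    simp only [eq_iff_iff, chainCond]
    constructor
    · intro h i j hij; exact h i j hij (le_of_lt j.isLt)
    · intro h i j hij _; exact h i j hij
  rw [heq] at this
  exact this

theorem chain_tele (hn : 1 ≤ n) {y z : Fin n → G} (h : chainCond y z) :
    ∀ k (hk : k < n), (z ⟨0, hn⟩)⁻¹ * z ⟨k, hk⟩ = (y ⟨0, hn⟩)⁻¹ * y ⟨k, hk⟩ := by
  intro k
  induction k with
  | zero => intro hk; simp
  | succ k ih =>
    intro hk
    have hk' : k < n := by omega
    have h1 := h ⟨k, hk'⟩ ⟨k + 1, hk⟩ rfl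
    have e1 : (z ⟨0, hn⟩)⁻¹ * z ⟨k + 1, hk⟩
        = ((z ⟨0, hn⟩)⁻¹ * z ⟨k, hk'⟩) * ((z ⟨k, hk'⟩)⁻¹ * z ⟨k + 1, hk⟩) := by group
    have e2 : (y ⟨0, hn⟩)⁻¹ * y ⟨k + 1, hk⟩
        = ((y ⟨0, hn⟩)⁻¹ * y ⟨k, hk'⟩) * ((y ⟨k, hk'⟩)⁻¹ * y ⟨k + 1, hk⟩) := by group
    rw [e1, e2, ih hk', h1]

/-! ### Commutation of generators with `Uop` -/

theorem Rop_comm (i : Fin n) (g g' : G) :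
    Rop G n i g * Uop G n g' = Uop G n g' * Rop G n i g := by
  apply LinearMap.ext; intro f
  funext z
  simp only [Module.End.mul_apply, Rop, Uop, permOp_apply]
  congr 1
  funext k
  by_cases hk : k = i
  · subst hk
    simp [Function.update_self, mul_assoc]
  · simp [Function.update_of_ne hk]

theorem Sop_comm (i j : Fin n) (h : G) (g : G) :
    Sop G n i j h * Uop G n g = Uop G n g * Sop G n i j h := by
  apply LinearMap.ext; intro f
  funext z
  simp only [Module.End.mul_apply, Sop, Uop, diagOp_apply, permOp_apply]
  have e : (g⁻¹ * z i)⁻¹ * (g⁻¹ * z j) = (z i)⁻¹ * z j := by group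
  simp only [e]

/-- `𝔇ⁿ_smooth` equals the commutant of the diagonal left-translation
representation: `T ∈ 𝔇ⁿ_smooth` iff `T U_g = U_g T` for all `g ∈ G`. -/
theorem stmt5 (hn : 1 ≤ n) (T : Module.End ℂ (Hn G n)) :
    T ∈ DSmooth G n ↔ ∀ g : G, T * Uop G n g = Uop G n g * T := by
  constructor
  · intro hT g
    induction hT using Algebra.adjoin_induction with
    | mem x hx =>
      rcases hx with ⟨i, g0, rfl⟩ | ⟨i, j, h, hij, rfl⟩
      · exact Rop_comm i g0 g
      · exact Sop_comm i j h g
    | algebraMap r => exact (Algebra.commutes r (Uop G n g)).symm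
    | add x y hx hy ihx ihy => rw [add_mul, mul_add, ihx, ihy]
    | mul x y hx hy ihx ihy => rw [mul_assoc, ihy, ← mul_assoc, ihx, mul_assoc]
  · intro hcomm
    have key : T = ∑ y ∈ Finset.univ.filter (fun y : Fin n → G => y ⟨0, hn⟩ = 1),
        ∑ x : Fin n → G, (T (ket G n y)) x •
          (Rall (fun i => (y i)⁻¹ * x i) * Pchain y) := by
      apply end_ext
      intro z
      set y₀ : Fin n → G := fun i => (z ⟨0, hn⟩)⁻¹ * z i with hy₀
      have hchain : chainCond y₀ z := by
        intro i j hij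
        simp only [hy₀]
        group
      have hz : Uop G n (z ⟨0, hn⟩) (ket G n y₀) = ket G n z := by
        rw [Uop_ket]
        congr 1
        funext k
        simp [hy₀]
      -- LHS
      have lhs_eq : T (ket G n z) = ∑ x : Fin n → G,
          (T (ket G n y₀)) x • ket G n (fun k => z ⟨0, hn⟩ * x k) := by
        rw [← hz, ← Module.End.mul_apply, hcomm, Module.End.mul_apply]
        conv_lhs => rw [ket_decomp (T (ket G n y₀))]
        rw [map_sum]
        exact Finset.sum_congr rfl fun x _ => by rw [map_smul, Uop_ket]
      rw [lhs_eq]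
      -- RHS
      simp only [LinearMap.sum_apply, LinearMap.smul_apply, Module.End.mul_apply,
        Pchain, diagOp_ket, map_smul, Rall_ket]
      have hmem : y₀ ∈ Finset.univ.filter (fun y : Fin n → G => y ⟨0, hn⟩ = 1) := by
        rw [Finset.mem_filter]
        refine ⟨Finset.mem_univ _, ?_⟩
        simp [hy₀]
      have hvanish : ∀ y ∈ Finset.univ.filter (fun y : Fin n → G => y ⟨0, hn⟩ = 1),
          y ≠ y₀ → (∑ x : Fin n → G, T (ket G n y) x •
            (if chainCond y z then (1 : ℂ) else 0) •
              ket G n fun i => z i * ((y i)⁻¹ * x i)) = 0 := by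
        intro y hy hne
        apply Finset.sum_eq_zero
        intro x _
        have hnc : ¬ chainCond y z := by
          intro hc
          apply hne
          have hy1 : y ⟨0, hn⟩ = 1 := (Finset.mem_filter.mp hy).2
          funext i
          have := chain_tele hn hc (i : ℕ) i.isLt
          rw [hy1, inv_one, one_mul, Fin.eta] at this
          rw [← this, hy₀]
        rw [if_neg hnc, zero_smul, smul_zero]
      rw [Finset.sum_eq_single_of_mem y₀ hmem hvanish]
      apply Finset.sum_congr rfl
      intro x _
      rw [if_pos hchain, one_smul]
      congr 1
      funext i
      simp only [hy₀]
      group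
    rw [key]
    exact Subalgebra.sum_mem _ fun y _ => Subalgebra.sum_mem _ fun x _ =>
      Subalgebra.smul_mem _ (mul_mem (Rall_mem _) (Pchain_mem _)) _
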